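/- arXiv:2101.11630 — 6 statements merged into one kernel-verified Lean document; each statement's English description precedes it below -/
import Mathlib

section
/- The operator S = 1 − |φ⁺⟩⟨φ⁺|^{A_I B_I¹} ⊗ |𝟙⟩⟩⟨⟨𝟙|^{A_O B_I²} satisfies: (a) tr_{A_O}(S) ⪰ 0 and (b) S^{T_{A_I}} ⪰ 0, where |𝟙⟩⟩ = Σ_i |ii⟩ is the un-normalized maximally entangled vector on A_O ⊗ B_I² with all local dimensions equal to d. -/
open Matrix ComplexOrder

/-!
Since `(|φ⁺⟩⟨φ⁺|)^{T_{A_I}} = d⁻¹ SWAP` and `⟨⟨𝟙|𝟙⟩⟩ = d`, both operators have the form `c − R` with `c ≥ 1`,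
`R` Hermitian and `R³ = R`: `tr_{A_O} S = d − |φ⁺⟩⟨φ⁺| ⊗ 1` with a projection, and
`S^{T_{A_I}} = 1 − d⁻¹ SWAP ⊗ |𝟙⟩⟩⟨⟨𝟙|`. For such `R` the spectrum lies in `{-1, 0, 1}`; concretely
`1 − R = (1 − R²)ᴴ(1 − R²) + ½ (R² − R)ᴴ(R² − R)`.
-/

theorem Matrix.posSemidef_one_sub_of_mul_mul_self_eq {n 𝕜 : Type*} [Fintype n] [DecidableEq n]
    [RCLike 𝕜] {R : Matrix n n 𝕜} (hR : R.IsHermitian) (h3 : R * R * R = R) :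
    (1 - R).PosSemidef := by
  have h4 : R * R * (R * R) = R * R := by rw [← Matrix.mul_assoc, h3]
  have hsq : (R * R - R) * (R * R - R) = (2 : 𝕜) • (R * R - R) := by
    simp only [sub_mul, mul_sub, h4, h3, ← Matrix.mul_assoc]
    module
  have hdecomp : 1 - R =
      (1 - R * R)ᴴ * (1 - R * R) + (2⁻¹ : 𝕜) • ((R * R - R)ᴴ * (R * R - R)) := by
    simp only [conjTranspose_sub, conjTranspose_one, conjTranspose_mul, hR.eq, hsq, smul_smul,
      sub_mul, mul_sub, one_mul, mul_one, h4]
    norm_num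
  rw [hdecomp]
  exact (posSemidef_conjTranspose_mul_self _).add
    ((posSemidef_conjTranspose_mul_self _).smul (inv_nonneg.mpr zero_le_two))

noncomputable section

/-- `|φ⁺⟩^{A_I B_I¹} ⊗ |𝟙⟩⟩^{A_O B_I²}`, with factors ordered `(A_I, A_O, B_I¹, B_I²)`. -/
def phiPlusTensorVec (d : ℕ) : Fin d × Fin d × Fin d × Fin d → ℂ :=
  fun p => if p.1 = p.2.2.1 ∧ p.2.1 = p.2.2.2 then ((Real.sqrt d : ℂ))⁻¹ else 0

/-- `|φ⁺⟩⟨φ⁺|^{A_I B_I¹} ⊗ 1^{B_I²}`, with factors ordered `(A_I, B_I¹, B_I²)`. -/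
def maxEntProjTensorOne (d : ℕ) : Matrix (Fin d × Fin d × Fin d) (Fin d × Fin d × Fin d) ℂ :=
  of fun p q => if p.1 = p.2.1 ∧ q.1 = q.2.1 ∧ p.2.2 = q.2.2 then (d : ℂ)⁻¹ else 0

/-- `d⁻¹ SWAP^{A_I B_I¹} ⊗ |𝟙⟩⟩⟨⟨𝟙|^{A_O B_I²}`, with factors ordered `(A_I, A_O, B_I¹, B_I²)`. -/
def swapTensorMaxEnt (d : ℕ) :
    Matrix (Fin d × Fin d × Fin d × Fin d) (Fin d × Fin d × Fin d × Fin d) ℂ :=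
  of fun p q => if q.1 = p.2.2.1 ∧ p.2.1 = p.2.2.2 ∧ p.1 = q.2.2.1 ∧ q.2.1 = q.2.2.2
    then (d : ℂ)⁻¹ else 0

end

theorem vecMulVec_phiPlusTensorVec_apply (d : ℕ) (p q : Fin d × Fin d × Fin d × Fin d) :
    vecMulVec (phiPlusTensorVec d) (star (phiPlusTensorVec d)) p q =
      if (p.1 = p.2.2.1 ∧ p.2.1 = p.2.2.2) ∧ (q.1 = q.2.2.1 ∧ q.2.1 = q.2.2.2)
      then (d : ℂ)⁻¹ else 0 := by
  have hsq : ((Real.sqrt d : ℂ))⁻¹ * ((Real.sqrt d : ℂ))⁻¹ = (d : ℂ)⁻¹ := by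
    rw [← mul_inv, ← Complex.ofReal_mul, Real.mul_self_sqrt d.cast_nonneg,
      Complex.ofReal_natCast]
  simp only [vecMulVec_apply, phiPlusTensorVec, Pi.star_apply, ite_and]
  split_ifs <;> simp [hsq]

theorem partialTrace_one_sub_phiPlusTensorVec (d : ℕ) :
    (of fun p q : Fin d × Fin d × Fin d => ∑ a : Fin d,
      (1 - vecMulVec (phiPlusTensorVec d) (star (phiPlusTensorVec d)))
        (p.1, a, p.2.1, p.2.2) (q.1, a, q.2.1, q.2.2)) =
      (d : ℂ) • 1 - maxEntProjTensorOne d := by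
  ext p q
  simp [vecMulVec_phiPlusTensorVec_apply, maxEntProjTensorOne, one_apply,
    Finset.sum_sub_distrib, Prod.ext_iff, ite_and]

theorem partialTranspose_one_sub_phiPlusTensorVec (d : ℕ) :
    (of fun p q : Fin d × Fin d × Fin d × Fin d =>
      (1 - vecMulVec (phiPlusTensorVec d) (star (phiPlusTensorVec d)))
        (q.1, p.2.1, p.2.2.1, p.2.2.2) (p.1, q.2.1, q.2.2.1, q.2.2.2)) =
      1 - swapTensorMaxEnt d := by
  ext p q
  simp only [vecMulVec_phiPlusTensorVec_apply, swapTensorMaxEnt, Matrix.sub_apply, one_apply,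
    of_apply, Prod.ext_iff]
  congr 1
  · exact if_congr (by simp only [eq_comm]) rfl rfl
  · exact if_congr (by tauto) rfl rfl

theorem maxEntProjTensorOne_isHermitian (d : ℕ) : (maxEntProjTensorOne d).IsHermitian := by
  ext p q
  simp only [conjTranspose_apply, maxEntProjTensorOne, of_apply]
  split_ifs <;> simp_all

theorem maxEntProjTensorOne_mul_self {d : ℕ} (hd : d ≠ 0) :
    maxEntProjTensorOne d * maxEntProjTensorOne d = maxEntProjTensorOne d := by
  have hd' : (d : ℂ) ≠ 0 := Nat.cast_ne_zero.mpr hd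
  ext p q
  simp [maxEntProjTensorOne, mul_apply, Fintype.sum_prod_type, ite_and, Finset.sum_ite_irrel]
  split_ifs <;> simp [mul_inv_cancel_left₀ hd']

theorem swapTensorMaxEnt_isHermitian (d : ℕ) : (swapTensorMaxEnt d).IsHermitian := by
  ext p q
  simp only [conjTranspose_apply, swapTensorMaxEnt, of_apply]
  split_ifs <;> simp_all

theorem swapTensorMaxEnt_mul_mul_self {d : ℕ} (hd : d ≠ 0) :
    swapTensorMaxEnt d * swapTensorMaxEnt d * swapTensorMaxEnt d = swapTensorMaxEnt d := by
  have hd' : (d : ℂ) ≠ 0 := Nat.cast_ne_zero.mpr hd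
  ext p q
  simp [swapTensorMaxEnt, mul_apply, Fintype.sum_prod_type, ite_and, Finset.sum_ite_irrel]
  split_ifs <;> simp [mul_inv_cancel_left₀ hd']

/-- For `S = 1 - |φ⁺⟩⟨φ⁺|^{A_I B_I¹} ⊗ |𝟙⟩⟩⟨⟨𝟙|^{A_O B_I²}` (all local dimensions `d`,
factor order `A_I, A_O, B_I¹, B_I²`): (a) the partial trace of `S` over `A_O` is
positive semidefinite, and (b) the partial transpose of `S` on `A_I` is positive
semidefinite. -/
theorem stmt_4 (d : ℕ) (hd : 1 ≤ d)
    (v : Fin d × Fin d × Fin d × Fin d → ℂ)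
    (hv : v = fun p => if p.1 = p.2.2.1 ∧ p.2.1 = p.2.2.2
      then ((Real.sqrt d : ℂ))⁻¹ else 0)
    (S : Matrix (Fin d × Fin d × Fin d × Fin d) (Fin d × Fin d × Fin d × Fin d) ℂ)
    (hS : S = 1 - Matrix.vecMulVec v (star v)) :
    (Matrix.of fun p q : Fin d × Fin d × Fin d =>
        ∑ a : Fin d, S (p.1, a, p.2.1, p.2.2) (q.1, a, q.2.1, q.2.2)).PosSemidef ∧
    (Matrix.of fun p q : Fin d × Fin d × Fin d × Fin d =>
        S (q.1, p.2.1, p.2.2.1, p.2.2.2) (p.1, q.2.1, q.2.2.1, q.2.2.2)).PosSemidef := by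
  have hv' : v = phiPlusTensorVec d := hv
  subst hv' hS
  have hd0 : d ≠ 0 := Nat.one_le_iff_ne_zero.mp hd
  rw [partialTrace_one_sub_phiPlusTensorVec, partialTranspose_one_sub_phiPlusTensorVec]
  constructor
  · have hP := maxEntProjTensorOne_mul_self hd0
    rw [show (d : ℂ) • 1 - maxEntProjTensorOne d =
        ((d : ℂ) - 1) • 1 + (1 - maxEntProjTensorOne d) by module]
    exact (PosSemidef.one.smul (sub_nonneg.mpr (by exact_mod_cast hd))).add
      (posSemidef_one_sub_of_mul_mul_self_eq (maxEntProjTensorOne_isHermitian d)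
        (by rw [hP, hP]))
  · exact posSemidef_one_sub_of_mul_mul_self_eq (swapTensorMaxEnt_isHermitian d)
      (swapTensorMaxEnt_mul_mul_self hd0)
end

section
/- Any Hermitian operator S on A_I ⊗ A_O ⊗ B_I satisfying tr_{A_O}(S) ⪰ 0 and S^{T_{A_I}} ⪰ 0 is a non-classical CCDC witness: tr(S·W) ≥ 0 for every operator W of the form W = p(ρ^{A_I B_I} ⊗ 1^{A_O}) + (1−p) Σ_i q_i ρ_i^{A_I} ⊗ D_i^{A_O B_I} where p ∈ [0,1], ρ and ρ_i are density operators, the q_i form a probability distribution, and each D_i ⪰ 0 satisfies tr_{B_I}(D_i) = 1^{A_O}. -/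
/-!
Both kinds of classical processes pair nonnegatively with `S`, and the pairing is linear, so
every convex combination does too. Tracing out `A_O` turns `tr(S (ρ ⊗ 1))` into
`tr(tr_{A_O}(S) ρ)`, and transposing `A_I` turns `tr(S (ρᵢ ⊗ Dᵢ))` into
`tr(S^{T_{A_I}} (ρᵢᵀ ⊗ Dᵢ))`. In both cases the result is the trace of a product of two
positive semidefinite matrices, which is nonnegative.
-/

open Matrix ComplexOrder Kronecker

namespace Matrix

variable {α β γ R : Type*} [Fintype α] [Fintype β] [Fintype γ]

def partialTransposeLeft (S : Matrix (α × β) (α × β) R) : Matrix (α × β) (α × β) R :=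
  of fun p q => S (q.1, p.2) (p.1, q.2)

def partialTraceMiddle [AddCommMonoid R] (S : Matrix (α × β × γ) (α × β × γ) R) :
    Matrix (α × γ) (α × γ) R :=
  of fun p q => ∑ b, S (p.1, b, p.2) (q.1, b, q.2)

def tensorOneMiddle [Zero R] [One R] [Mul R] [DecidableEq β] (ρ : Matrix (α × γ) (α × γ) R) :
    Matrix (α × β × γ) (α × β × γ) R :=
  of fun p q => ρ (p.1, p.2.2) (q.1, q.2.2) * (if p.2.1 = q.2.1 then 1 else 0)

theorem trace_mul_kronecker_eq_trace_partialTransposeLeft_mul [Semiring R]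
    (S : Matrix (α × β) (α × β) R) (A : Matrix α α R) (B : Matrix β β R) :
    (S * (A ⊗ₖ B)).trace = (S.partialTransposeLeft * (Aᵀ ⊗ₖ B)).trace := by
  simp only [trace, diag, mul_apply, partialTransposeLeft, of_apply, kroneckerMap_apply,
    transpose_apply]
  rw [← Finset.sum_product', ← Finset.sum_product']
  let swapLeft : (α × β) × α × β ≃ (α × β) × α × β :=
    ⟨fun z => ((z.2.1, z.1.2), (z.1.1, z.2.2)), fun z => ((z.2.1, z.1.2), (z.1.1, z.2.2)),
      fun _ => rfl, fun _ => rfl⟩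
  refine Finset.sum_equiv swapLeft (by simp) fun _ _ => ?_
  simp [swapLeft]

theorem trace_mul_tensorOneMiddle [Semiring R] [DecidableEq β]
    (S : Matrix (α × β × γ) (α × β × γ) R) (ρ : Matrix (α × γ) (α × γ) R) :
    (S * tensorOneMiddle ρ).trace = (S.partialTraceMiddle * ρ).trace := by
  simp only [trace, diag, mul_apply, tensorOneMiddle, partialTraceMiddle, of_apply,
    Fintype.sum_prod_type, Finset.sum_mul, mul_ite, mul_one, mul_zero, Finset.sum_ite_irrel,
    Finset.sum_const_zero, Fintype.sum_ite_eq']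
  refine Finset.sum_congr rfl fun _ _ => ?_
  rw [Finset.sum_comm]
  refine Finset.sum_congr rfl fun _ _ => ?_
  rw [Finset.sum_comm]
  exact Finset.sum_congr rfl fun _ _ => Finset.sum_comm

open scoped MatrixOrder in
theorem PosSemidef.trace_mul_nonneg [DecidableEq α] {𝕜 : Type*} [RCLike 𝕜] {A B : Matrix α α 𝕜}
    (hA : A.PosSemidef) (hB : B.PosSemidef) : 0 ≤ (A * B).trace := by
  obtain ⟨C, rfl⟩ := CStarAlgebra.nonneg_iff_eq_star_mul_self.mp hB.nonneg
  rw [trace_mul_comm, Matrix.mul_assoc, trace_mul_comm]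
  exact (hA.mul_mul_conjTranspose_same C).trace_nonneg

end Matrix

theorem stmt_5_general (nI nO nB m : ℕ)
    (S : Matrix (Fin nI × Fin nO × Fin nB) (Fin nI × Fin nO × Fin nB) ℂ)
    (hS1 : (Matrix.of fun p q : Fin nI × Fin nB =>
      ∑ a : Fin nO, S (p.1, a, p.2) (q.1, a, q.2)).PosSemidef)
    (hS2 : (Matrix.of fun p q : Fin nI × Fin nO × Fin nB =>
      S (q.1, p.2) (p.1, q.2)).PosSemidef)
    (p : ℝ) (hp0 : 0 ≤ p) (hp1 : p ≤ 1)
    (ρ : Matrix (Fin nI × Fin nB) (Fin nI × Fin nB) ℂ)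
    (hρ : ρ.PosSemidef)
    (q : Fin m → ℝ) (hq0 : ∀ i, 0 ≤ q i)
    (ρs : Fin m → Matrix (Fin nI) (Fin nI) ℂ)
    (hρs : ∀ i, (ρs i).PosSemidef)
    (D : Fin m → Matrix (Fin nO × Fin nB) (Fin nO × Fin nB) ℂ)
    (hD : ∀ i, (D i).PosSemidef)
    (W : Matrix (Fin nI × Fin nO × Fin nB) (Fin nI × Fin nO × Fin nB) ℂ)
    (hW : W = (p : ℂ) • (Matrix.of fun p' q' : Fin nI × Fin nO × Fin nB =>
        ρ (p'.1, p'.2.2) (q'.1, q'.2.2) * (if p'.2.1 = q'.2.1 then 1 else 0))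
      + ((1 - p : ℝ) : ℂ) • ∑ i, (q i : ℂ) •
        (Matrix.of fun p' q' : Fin nI × Fin nO × Fin nB =>
          ρs i p'.1 q'.1 * D i p'.2 q'.2)) :
    0 ≤ (S * W).trace := by
  have commonCause : 0 ≤ (S * tensorOneMiddle ρ).trace := by
    rw [trace_mul_tensorOneMiddle]
    exact hS1.trace_mul_nonneg hρ
  have directCause (i : Fin m) : 0 ≤ (S * (ρs i ⊗ₖ D i)).trace := by
    rw [trace_mul_kronecker_eq_trace_partialTransposeLeft_mul]
    exact hS2.trace_mul_nonneg ((hρs i).transpose.kronecker (hD i))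
  change W = (p : ℂ) • tensorOneMiddle ρ + ((1 - p : ℝ) : ℂ) • ∑ i, (q i : ℂ) • (ρs i ⊗ₖ D i)
    at hW
  simp only [hW, Matrix.mul_add, Matrix.mul_smul, Matrix.mul_sum, trace_add, trace_smul,
    trace_sum, smul_eq_mul]
  refine add_nonneg (mul_nonneg (mod_cast hp0) commonCause)
    (mul_nonneg (mod_cast sub_nonneg.mpr hp1) (Finset.sum_nonneg fun i _ => ?_))
  exact mul_nonneg (mod_cast hq0 i) (directCause i)

/-- Any Hermitian operator `S` on `A_I ⊗ A_O ⊗ B_I` with `tr_{A_O}(S) ⪰ 0` and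
`S^{T_{A_I}} ⪰ 0` is a non-classical CCDC witness: `tr(S·W) ≥ 0` for every classical
CCDC process `W = p (ρ^{A_I B_I} ⊗ 1^{A_O}) + (1-p) Σ_i q_i ρ_i^{A_I} ⊗ D_i^{A_O B_I}`. -/
theorem stmt_5 (nI nO nB m : ℕ)
    (S : Matrix (Fin nI × Fin nO × Fin nB) (Fin nI × Fin nO × Fin nB) ℂ)
    (hSh : S.IsHermitian)
    (hS1 : (Matrix.of fun p q : Fin nI × Fin nB =>
      ∑ a : Fin nO, S (p.1, a, p.2) (q.1, a, q.2)).PosSemidef)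
    (hS2 : (Matrix.of fun p q : Fin nI × Fin nO × Fin nB =>
      S (q.1, p.2) (p.1, q.2)).PosSemidef)
    (p : ℝ) (hp0 : 0 ≤ p) (hp1 : p ≤ 1)
    (ρ : Matrix (Fin nI × Fin nB) (Fin nI × Fin nB) ℂ)
    (hρ : ρ.PosSemidef) (hρtr : ρ.trace = 1)
    (q : Fin m → ℝ) (hq0 : ∀ i, 0 ≤ q i) (hq1 : ∑ i, q i = 1)
    (ρs : Fin m → Matrix (Fin nI) (Fin nI) ℂ)
    (hρs : ∀ i, (ρs i).PosSemidef) (hρstr : ∀ i, (ρs i).trace = 1)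
    (D : Fin m → Matrix (Fin nO × Fin nB) (Fin nO × Fin nB) ℂ)
    (hD : ∀ i, (D i).PosSemidef)
    (hDtr : ∀ i a a', (∑ b : Fin nB, D i (a, b) (a', b)) = if a = a' then 1 else 0)
    (W : Matrix (Fin nI × Fin nO × Fin nB) (Fin nI × Fin nO × Fin nB) ℂ)
    (hW : W = (p : ℂ) • (Matrix.of fun p' q' : Fin nI × Fin nO × Fin nB =>
        ρ (p'.1, p'.2.2) (q'.1, q'.2.2) * (if p'.2.1 = q'.2.1 then 1 else 0))
      + ((1 - p : ℝ) : ℂ) • ∑ i, (q i : ℂ) •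
        (Matrix.of fun p' q' : Fin nI × Fin nO × Fin nB =>
          ρs i p'.1 q'.1 * D i p'.2 q'.2)) :
    0 ≤ (S * W).trace :=
  stmt_5_general nI nO nB m S hS1 hS2 p hp0 hp1 ρ hρ q hq0 ρs hρs D hD W hW
end

section
/- The operator S = 1 − (|GHZ⟩⟩⟨⟨GHZ| + σ_X^{A_O}|GHZ⟩⟩⟨⟨GHZ|σ_X^{A_O}) on three qubits satisfies S^{T_{A_I}} ⪰ 0, where T_{A_I} is the partial transpose on the first qubit. -/
open Matrix ComplexOrder

/-- Elementwise triple tensor product of three 2×2 matrices, on `ℂ²⊗ℂ²⊗ℂ²`. -/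
def tens3 (A B C : Matrix (Fin 2) (Fin 2) ℂ) :
    Matrix (Fin 2 × Fin 2 × Fin 2) (Fin 2 × Fin 2 × Fin 2) ℂ :=
  Matrix.of fun p q => A p.1 q.1 * B p.2.1 q.2.1 * C p.2.2 q.2.2

def σX : Matrix (Fin 2) (Fin 2) ℂ := !![0, 1; 1, 0]

/-- Factor `L`: rows `(0,0,1)` and `(0,1,1)` carry the two vectors. -/
def Lfac : Matrix (Fin 2 × Fin 2 × Fin 2) (Fin 2 × Fin 2 × Fin 2) ℂ :=
  Matrix.of fun p q =>
    if p = (0,0,1) then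
      (if q = (0,0,1) then 1 else if q = (1,1,0) then -1 else 0)
    else if p = (0,1,1) then
      (if q = (0,1,1) then 1 else if q = (1,0,0) then -1 else 0)
    else 0

set_option maxHeartbeats 1000000 in
/-- For `S = 1 − (|GHZ⟩⟩⟨⟨GHZ| + σ_X^{A_O}|GHZ⟩⟩⟨⟨GHZ|σ_X^{A_O})` on three qubits,
the partial transpose of `S` on the first qubit `A_I` is positive semidefinite. -/
theorem stmt_10
    (g : Fin 2 × Fin 2 × Fin 2 → ℂ)
    (hg : g = fun p => if p.1 = p.2.1 ∧ p.2.1 = p.2.2 then 1 else 0)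
    (X3 : Matrix (Fin 2 × Fin 2 × Fin 2) (Fin 2 × Fin 2 × Fin 2) ℂ)
    (hX3 : X3 = tens3 1 σX 1)
    (S : Matrix (Fin 2 × Fin 2 × Fin 2) (Fin 2 × Fin 2 × Fin 2) ℂ)
    (hS : S = 1 -
      (Matrix.vecMulVec g (star g) + X3 * Matrix.vecMulVec g (star g) * X3)) :
    (Matrix.of fun p q : Fin 2 × Fin 2 × Fin 2 =>
        S (q.1, p.2) (p.1, q.2)).PosSemidef := by
  have key : (Matrix.of fun p q : Fin 2 × Fin 2 × Fin 2 =>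
      S (q.1, p.2) (p.1, q.2)) = Lfacᴴ * Lfac := by
    subst hg hX3 hS
    ext ⟨a, b, c⟩ ⟨d, e, f⟩
    fin_cases a <;> fin_cases b <;> fin_cases c <;> fin_cases d <;> fin_cases e <;>
      fin_cases f <;>
      simp [Matrix.mul_apply, Matrix.one_apply, Matrix.vecMulVec_apply, Lfac, tens3, σX,
        Fintype.sum_prod_type, Fin.sum_univ_two, Prod.ext_iff]
  rw [key]
  exact Matrix.posSemidef_conjTranspose_mul_self Lfac
end

section
/- Applying an entanglement-breaking channel Λ to the A_I subsystem of any bipartite ordered process W yields a direct-cause process: if W = ρ^{A_I aux} * D^{aux A_O → B_I} with ρ a state and D a channel Choi operator, and Λ: L(A_I)→L(A_I) is entanglement breaking, then (Λ ⊗ id^{A_O B_I})(W) can be written as Σ_i p_i ρ_i^{A_I} ⊗ D_i^{A_O B_I} with ρ_i states and D_i channel Choi operators. -/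
open Matrix ComplexOrder

/-!
Since `Λ` is entanglement breaking, `(Λ ⊗ id)(ρ) = ∑ₖ Aₖ ⊗ Bₖ` with `Aₖ, Bₖ ⪰ 0`. The map
`Λ ⊗ id` on `A_I` commutes with the link product over `aux`, so
`(Λ ⊗ id)(ρ * D) = ∑ₖ Aₖ ⊗ (Bₖ * D)`. Each `Bₖ * D` is positive and its partial trace over
`B_I` is `tr Bₖ • 1`, so after normalising `Aₖ` and `Bₖ` to states the terms become products of
states and channel Choi operators, weighted by `tr Aₖ · tr Bₖ`; these weights sum to
`tr (Λ ⊗ id)(ρ) = tr ρ = 1` because `Λ` is trace preserving.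
-/

open scoped Kronecker

namespace Matrix

variable {ι α σ β γ : Type*}

section CommSemiring

variable {R : Type*} [CommSemiring R]

/-- `(Λ ⊗ id)(M)`. -/
def applyLeft (Λ : Matrix ι ι R → Matrix ι ι R) (M : Matrix (ι × σ) (ι × σ) R) :
    Matrix (ι × σ) (ι × σ) R :=
  of fun p q => Λ (of fun i j => M (i, p.2) (j, q.2)) p.1 q.1

/-- The link product `B * D` over the shared system `α`. -/
def linkProduct [Fintype α] (B : Matrix α α R) (D : Matrix (α × σ) (α × σ) R) : Matrix σ σ R :=
  of fun s t => ∑ x, ∑ y, B y x * D (y, s) (x, t)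

/-- The link product `ρ * D` over `α`, with `ρ` acting on the passive system `ι` as well. -/
def partialLinkProduct [Fintype α] (ρ : Matrix (ι × α) (ι × α) R) (D : Matrix (α × σ) (α × σ) R) :
    Matrix (ι × σ) (ι × σ) R :=
  of fun p q => ∑ x, ∑ y, ρ (p.1, y) (q.1, x) * D (y, p.2) (x, q.2)

theorem trace_applyLeft [Fintype ι] [Fintype σ] {Λ : Matrix ι ι R → Matrix ι ι R}
    (hΛ : ∀ X, (Λ X).trace = X.trace) (M : Matrix (ι × σ) (ι × σ) R) :
    (applyLeft Λ M).trace = M.trace := by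
  have hslice : ∀ s, ∑ i, applyLeft Λ M (i, s) (i, s) = ∑ i, M (i, s) (i, s) :=
    fun s => hΛ (of fun i j => M (i, s) (j, s))
  simp only [trace, diag, Fintype.sum_prod_type]
  rw [Finset.sum_comm, Finset.sum_congr rfl fun s _ => hslice s, Finset.sum_comm]

theorem applyLeft_partialLinkProduct [Fintype α] {Λ : Matrix ι ι R → Matrix ι ι R}
    (hΛ : IsLinearMap R Λ) (ρ : Matrix (ι × α) (ι × α) R) (D : Matrix (α × σ) (α × σ) R) :
    applyLeft Λ (partialLinkProduct ρ D) = partialLinkProduct (applyLeft Λ ρ) D := by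
  let L := IsLinearMap.mk' Λ hΛ
  ext ⟨i, s⟩ ⟨j, t⟩
  have hslice : (of fun i j => partialLinkProduct ρ D (i, s) (j, t)) =
      ∑ x, ∑ y, D (y, s) (x, t) • of fun i j => ρ (i, y) (j, x) := by
    ext i j
    simp [partialLinkProduct, sum_apply, mul_comm]
  change L _ i j = _
  simp only [applyLeft, partialLinkProduct, of_apply] at hslice ⊢
  rw [hslice]
  simp only [map_sum, _root_.map_smul, sum_apply, smul_apply, smul_eq_mul, mul_comm]
  rfl

theorem partialLinkProduct_sum_kronecker [Fintype α] {m : Type*} [Fintype m] (A : m → Matrix ι ι R)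
    (B : m → Matrix α α R) (D : Matrix (α × σ) (α × σ) R) :
    partialLinkProduct (∑ k, A k ⊗ₖ B k) D = ∑ k, A k ⊗ₖ linkProduct (B k) D := by
  ext p q
  simp only [partialLinkProduct, linkProduct, of_apply, sum_apply, kroneckerMap_apply,
    Finset.sum_mul, Finset.mul_sum, mul_assoc]
  exact (Finset.sum_congr rfl fun _ _ => Finset.sum_comm).trans Finset.sum_comm

theorem linkProduct_smul [Fintype α] (c : R) (B : Matrix α α R) (D : Matrix (α × σ) (α × σ) R) :
    linkProduct (c • B) D = c • linkProduct B D := by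
  ext s t
  simp [linkProduct, Finset.mul_sum, mul_assoc]

theorem sum_linkProduct_apply [Fintype α] [Fintype γ] [DecidableEq α] [DecidableEq β]
    {D : Matrix (α × β × γ) (α × β × γ) R}
    (hD : ∀ x a x' a', ∑ c, D (x, a, c) (x', a', c) = if (x, a) = (x', a') then 1 else 0)
    (B : Matrix α α R) (a a' : β) :
    ∑ c, linkProduct B D (a, c) (a', c) = if a = a' then B.trace else 0 := by
  have hswap : ∑ c, linkProduct B D (a, c) (a', c) =
      ∑ x, ∑ y, B y x * ∑ c, D (y, a, c) (x, a', c) := by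
    simp only [linkProduct, of_apply, Finset.mul_sum]
    rw [Finset.sum_comm]
    exact Finset.sum_congr rfl fun x _ => Finset.sum_comm
  rw [hswap]
  simp only [hD, Prod.mk.injEq, mul_ite, mul_zero, mul_one]
  split_ifs with h
  · simp [h, trace]
  · simp [h]

end CommSemiring

section RCLike

variable {𝕜 : Type*} [RCLike 𝕜]

theorem PosSemidef.linkProduct [Fintype α] [Fintype σ] {B : Matrix α α 𝕜}
    {D : Matrix (α × σ) (α × σ) 𝕜} (hB : B.PosSemidef) (hD : D.PosSemidef) :
    (linkProduct B D).PosSemidef := by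
  classical
  -- `B * D = Tᴴ ((B ⊗ J) ⊙ D) T`, with `J` the all-ones matrix and `T` summing out `α`.
  let J : Matrix σ σ 𝕜 := of fun _ _ => 1
  let T : Matrix (α × σ) σ 𝕜 := of fun p t => if p.2 = t then 1 else 0
  have hJ : J.PosSemidef := by
    convert posSemidef_conjTranspose_mul_self (of fun (_ : Unit) (_ : σ) => (1 : 𝕜))
    ext; simp [J, mul_apply]
  have hlink : Matrix.linkProduct B D = Tᴴ * ((B ⊗ₖ J) ⊙ D) * T := by
    ext s t
    simp [Matrix.linkProduct, T, J, mul_apply, hadamard_apply, Fintype.sum_prod_type,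
      conjTranspose_apply, ite_mul, mul_ite]
  rw [hlink]
  exact ((hB.kronecker hJ).hadamard hD).conjTranspose_mul_mul_same T

theorem PosSemidef.exists_eq_ofReal_smul_normalized [Fintype ι] [DecidableEq ι] [Nonempty ι]
    {A : Matrix ι ι 𝕜} (hA : A.PosSemidef) :
    ∃ t : ℝ, 0 ≤ t ∧ ∃ σ : Matrix ι ι 𝕜, σ.PosSemidef ∧ σ.trace = 1 ∧ A = (t : 𝕜) • σ := by
  obtain ⟨t, ht, htr⟩ := RCLike.nonneg_iff_exists_ofReal.mp hA.trace_nonneg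
  refine ⟨t, ht, ?_⟩
  rcases ht.eq_or_lt with rfl | ht
  · have hcard : (Fintype.card ι : 𝕜) ≠ 0 := Nat.cast_ne_zero.mpr Fintype.card_ne_zero
    refine ⟨(Fintype.card ι : 𝕜)⁻¹ • 1, PosSemidef.one.smul (by positivity), ?_, ?_⟩
    · simp [hcard]
    · simpa [eq_comm] using hA.trace_eq_zero_iff.mp (by simpa using htr.symm)
  · have ht' : (t : 𝕜) ≠ 0 := RCLike.ofReal_ne_zero.mpr ht.ne'
    refine ⟨(t : 𝕜)⁻¹ • A, hA.smul (by positivity), ?_, ?_⟩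
    · rw [trace_smul, ← htr, smul_eq_mul, inv_mul_cancel₀ ht']
    · rw [smul_smul, mul_inv_cancel₀ ht', one_smul]

end RCLike

end Matrix

/-- Applying an entanglement-breaking channel `Λ` to the `A_I` subsystem of any
bipartite ordered process `W = ρ^{A_I aux} * D^{aux A_O → B_I}` yields a direct-cause
process `Σ_i p_i ρ_i^{A_I} ⊗ D_i^{A_O B_I}`. Entanglement breaking is formulated as:
`(Λ ⊗ id)(σ)` is separable for every state `σ` on `A_I ⊗ ℂⁿ`, for every `n`. -/
theorem stmt_13 (nI na nO nB : ℕ)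
    (Λ : Matrix (Fin nI) (Fin nI) ℂ → Matrix (Fin nI) (Fin nI) ℂ)
    (hLin : IsLinearMap ℂ Λ)
    (hTP : ∀ X, (Λ X).trace = X.trace)
    (hEB : ∀ (n : ℕ) (σ : Matrix (Fin nI × Fin n) (Fin nI × Fin n) ℂ),
      σ.PosSemidef → σ.trace = 1 →
      ∃ (m : ℕ) (A : Fin m → Matrix (Fin nI) (Fin nI) ℂ)
        (B : Fin m → Matrix (Fin n) (Fin n) ℂ),
        (∀ k, (A k).PosSemidef) ∧ (∀ k, (B k).PosSemidef) ∧
        (Matrix.of fun p q : Fin nI × Fin n =>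
            Λ (Matrix.of fun i j => σ (i, p.2) (j, q.2)) p.1 q.1)
          = ∑ k, Matrix.of fun p q : Fin nI × Fin n => A k p.1 q.1 * B k p.2 q.2)
    (ρ : Matrix (Fin nI × Fin na) (Fin nI × Fin na) ℂ)
    (hρ : ρ.PosSemidef) (hρtr : ρ.trace = 1)
    (D : Matrix (Fin na × Fin nO × Fin nB) (Fin na × Fin nO × Fin nB) ℂ)
    (hD : D.PosSemidef)
    (hDtr : ∀ x a x' a', (∑ b : Fin nB, D (x, a, b) (x', a', b))
      = if (x, a) = (x', a') then 1 else 0)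
    (W : Matrix (Fin nI × Fin nO × Fin nB) (Fin nI × Fin nO × Fin nB) ℂ)
    (hW : W = Matrix.of fun p q : Fin nI × Fin nO × Fin nB =>
      ∑ x : Fin na, ∑ y : Fin na,
        ρ (p.1, y) (q.1, x) * D (y, p.2.1, p.2.2) (x, q.2.1, q.2.2)) :
    ∃ (m : ℕ) (w : Fin m → ℝ) (ρs : Fin m → Matrix (Fin nI) (Fin nI) ℂ)
      (Ds : Fin m → Matrix (Fin nO × Fin nB) (Fin nO × Fin nB) ℂ),
      (∀ k, 0 ≤ w k) ∧ (∑ k, w k) = 1 ∧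
      (∀ k, (ρs k).PosSemidef) ∧ (∀ k, (ρs k).trace = 1) ∧
      (∀ k, (Ds k).PosSemidef) ∧
      (∀ k a a', (∑ b : Fin nB, Ds k (a, b) (a', b)) = if a = a' then 1 else 0) ∧
      (Matrix.of fun p q : Fin nI × Fin nO × Fin nB =>
          Λ (Matrix.of fun i j => W (i, p.2) (j, q.2)) p.1 q.1)
        = ∑ k, (w k : ℂ) • Matrix.of fun p q : Fin nI × Fin nO × Fin nB =>
            ρs k p.1 q.1 * Ds k p.2 q.2 := by
  obtain ⟨hI, ha⟩ : Nonempty (Fin nI) ∧ Nonempty (Fin na) := by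
    rw [← nonempty_prod, ← not_isEmpty_iff]
    intro
    simp [trace_eq_zero_of_isEmpty] at hρtr
  obtain ⟨m, A, B, hA, hB, hsep⟩ := hEB na ρ hρ hρtr
  change applyLeft Λ ρ = ∑ k, A k ⊗ₖ B k at hsep
  choose a ha α hα hαtr hAα using fun k => (hA k).exists_eq_ofReal_smul_normalized
  choose b hb β hβ hβtr hBβ using fun k => (hB k).exists_eq_ofReal_smul_normalized
  have hweights : ∑ k, ((a k * b k : ℝ) : ℂ) = 1 := by
    rw [← hρtr, ← trace_applyLeft hTP ρ, hsep, trace_sum]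
    simp [trace_kronecker, hAα, hBβ, hαtr, hβtr]
  refine ⟨m, fun k => a k * b k, α, fun k => linkProduct (β k) D,
    fun k => mul_nonneg (ha k) (hb k), by exact_mod_cast hweights, hα, hαtr,
    fun k => (hβ k).linkProduct hD, fun k _ _ => by rw [sum_linkProduct_apply hDtr, hβtr], ?_⟩
  change applyLeft Λ W = ∑ k, _ • α k ⊗ₖ linkProduct (β k) D
  rw [show W = partialLinkProduct ρ D from hW, applyLeft_partialLinkProduct hLin, hsep,
    partialLinkProduct_sum_kronecker]
  refine Finset.sum_congr rfl fun k _ => ?_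
  rw [hAα, hBβ, linkProduct_smul, smul_kronecker, kronecker_smul, smul_smul]
  push_cast
  rfl
end

section
/- The three-qubit operator W_SEP = (1/2)(|0⟩⟨0|⊗|0⟩⟨0|⊗|0⟩⟨0| + |1⟩⟨1|⊗|0⟩⟨0|⊗|1⟩⟨1| + |+⟩⟨+|⊗|1⟩⟨1|⊗|+⟩⟨+| + |−⟩⟨−|⊗|1⟩⟨1|⊗|−⟩⟨−|) is separable in the bipartition A_I | A_O B_I but admits no decomposition W_SEP = Σ_i p_i ρ_i^{A_I} ⊗ D_i^{A_O B_I} with ρ_i density operators, p_i a probability distribution, D_i ⪰ 0 and tr_{B_I}(D_i) = 1^{A_O} for all i. -/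
/-!
The four product terms of `W_SEP` are themselves a separable decomposition.

Now let `W_SEP = Σ_k w_k ρ_k ⊗ D_k` with positive terms and `tr_{B_I} D_k = 1`. The entries of
`W_SEP` at `|0⟩|01⟩` and at `|1⟩|00⟩` vanish, and a vanishing diagonal entry of a sum of positive
operators vanishes in every summand: `w_k ρ_k(0,0) D_k(01,01) = 0 = w_k ρ_k(1,1) D_k(00,00)`.
Since `D_k(00,00) + D_k(01,01) = 1`, this gives `w_k ρ_k(0,0) ρ_k(1,1) = 0`, and positivity of
`ρ_k` then kills its coherence `w_k ρ_k(0,1)`. Hence every entry of `W_SEP` between `A_I = 0` and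
`A_I = 1` would vanish, but `⟨0,10|W_SEP|1,11⟩ = 1/4`.
-/

open Matrix ComplexOrder

/-- `|u⟩⟨u| ⊗ |v⟩⟨v| ⊗ |w⟩⟨w|` on three qubits, written entrywise. -/
noncomputable def trip (u v w : Fin 2 → ℂ) :
    Matrix (Fin 2 × Fin 2 × Fin 2) (Fin 2 × Fin 2 × Fin 2) ℂ :=
  Matrix.of fun p q =>
    (u p.1 * star (u q.1)) * (v p.2.1 * star (v q.2.1)) * (w p.2.2 * star (w q.2.2))

open scoped Kronecker

namespace Matrix.PosSemidef

variable {𝕜 n : Type*} [RCLike 𝕜] [Fintype n] [DecidableEq n] {A : Matrix n n 𝕜}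

lemma apply_eq_zero_of_diag_eq_zero_right (hA : A.PosSemidef) {i : n} (hi : A i i = 0) (j : n) :
    A j i = 0 := by
  have h : A *ᵥ Pi.single i 1 = 0 :=
    (hA.dotProduct_mulVec_zero_iff _).mp (by simpa [mulVec_single_one] using hi)
  simpa [mulVec_single_one] using congrFun h j

lemma apply_eq_zero_of_diag_eq_zero_left (hA : A.PosSemidef) {i : n} (hi : A i i = 0) (j : n) :
    A i j = 0 := by
  rw [← hA.isHermitian.apply, hA.apply_eq_zero_of_diag_eq_zero_right hi, star_zero]

lemma mul_apply_eq_zero_of_diag {m : Type*} {c : 𝕜} {B : Matrix m m 𝕜} (hA : A.PosSemidef)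
    {i i' : n} {j₀ j₁ : m} (hB : B j₀ j₀ + B j₁ j₁ = 1) (h₀ : c * (A i i * B j₁ j₁) = 0)
    (h₁ : c * (A i' i' * B j₀ j₀) = 0) : c * A i i' = 0 := by
  have hdiag : c * A i i * A i' i' = 0 := by
    linear_combination (A i i) * h₁ + (A i' i') * h₀ - c * A i i * A i' i' * hB
  rcases mul_eq_zero.mp hdiag with h | h
  · rcases mul_eq_zero.mp h with h | h
    · simp [h]
    · simp [hA.apply_eq_zero_of_diag_eq_zero_left h]
  · simp [hA.apply_eq_zero_of_diag_eq_zero_right h]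

end Matrix.PosSemidef

section WeightedKronecker

variable {𝕜 ι m n : Type*} [RCLike 𝕜] [Fintype ι]
  {w : ι → ℝ} {ρ : ι → Matrix m m 𝕜} {D : ι → Matrix n n 𝕜} {W : Matrix (m × n) (m × n) 𝕜}

lemma diag_eq_zero_of_eq_sum_smul_kronecker (hw : ∀ k, 0 ≤ w k) (hρ : ∀ k, (ρ k).PosSemidef)
    (hD : ∀ k, (D k).PosSemidef) (hW : W = ∑ k, (w k : 𝕜) • ρ k ⊗ₖ D k) {i : m} {j : n}
    (h : W (i, j) (i, j) = 0) (k : ι) :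
    (w k : 𝕜) * (ρ k i i * D k j j) = 0 := by
  simp only [hW, Matrix.sum_apply, Matrix.smul_apply, kronecker_apply, smul_eq_mul] at h
  refine (Finset.sum_eq_zero_iff_of_nonneg fun k _ => ?_).mp h k (Finset.mem_univ k)
  exact mul_nonneg (RCLike.ofReal_nonneg.mpr (hw k))
    (mul_nonneg (hρ k).diag_nonneg (hD k).diag_nonneg)

lemma apply_eq_zero_of_eq_sum_smul_kronecker [Fintype m] [DecidableEq m] (hw : ∀ k, 0 ≤ w k)
    (hρ : ∀ k, (ρ k).PosSemidef) (hD : ∀ k, (D k).PosSemidef)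
    (hW : W = ∑ k, (w k : 𝕜) • ρ k ⊗ₖ D k) {i i' : m} {j₀ j₁ : n}
    (hnorm : ∀ k, D k j₀ j₀ + D k j₁ j₁ = 1) (h₀ : W (i, j₁) (i, j₁) = 0)
    (h₁ : W (i', j₀) (i', j₀) = 0) (x y : n) :
    W (i, x) (i', y) = 0 := by
  have hcoh (k : ι) : (w k : 𝕜) * ρ k i i' = 0 :=
    (hρ k).mul_apply_eq_zero_of_diag (hnorm k)
      (diag_eq_zero_of_eq_sum_smul_kronecker hw hρ hD hW h₀ k)
      (diag_eq_zero_of_eq_sum_smul_kronecker hw hρ hD hW h₁ k)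
  simp only [hW, Matrix.sum_apply, Matrix.smul_apply, kronecker_apply, smul_eq_mul, ← mul_assoc,
    hcoh, zero_mul, Finset.sum_const_zero]

end WeightedKronecker

lemma trip_eq_kronecker (u v w : Fin 2 → ℂ) :
    trip u v w = vecMulVec u (star u) ⊗ₖ
      vecMulVec (fun x => v x.1 * w x.2) (star fun x => v x.1 * w x.2) := by
  ext p q
  simp only [trip, of_apply, kroneckerMap_apply, vecMulVec_apply, Pi.star_apply,
    star_mul']
  ring

/-- The process `W_SEP` is separable in the bipartition `A_I | A_O B_I`, but admits no
direct-cause decomposition `Σ_i p_i ρ_i^{A_I} ⊗ D_i^{A_O B_I}` with `ρ_i` states and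
`D_i` Choi operators of channels (`D_i ⪰ 0`, `tr_{B_I}(D_i) = 1^{A_O}`). -/
theorem stmt_17
    (e0 e1 ep em : Fin 2 → ℂ)
    (he0 : e0 = ![1, 0]) (he1 : e1 = ![0, 1])
    (hep : ep = ![((Real.sqrt 2 : ℂ))⁻¹, ((Real.sqrt 2 : ℂ))⁻¹])
    (hem : em = ![((Real.sqrt 2 : ℂ))⁻¹, -((Real.sqrt 2 : ℂ))⁻¹])
    (W : Matrix (Fin 2 × Fin 2 × Fin 2) (Fin 2 × Fin 2 × Fin 2) ℂ)
    (hW : W = (2 : ℂ)⁻¹ •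
      (trip e0 e0 e0 + trip e1 e0 e1 + trip ep e1 ep + trip em e1 em)) :
    (∃ (m : ℕ) (A : Fin m → Matrix (Fin 2) (Fin 2) ℂ)
       (B : Fin m → Matrix (Fin 2 × Fin 2) (Fin 2 × Fin 2) ℂ),
       (∀ k, (A k).PosSemidef) ∧ (∀ k, (B k).PosSemidef) ∧
       W = ∑ k, Matrix.of fun p q : Fin 2 × Fin 2 × Fin 2 =>
         A k p.1 q.1 * B k p.2 q.2) ∧
    ¬ (∃ (m : ℕ) (w : Fin m → ℝ) (ρs : Fin m → Matrix (Fin 2) (Fin 2) ℂ)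
         (Ds : Fin m → Matrix (Fin 2 × Fin 2) (Fin 2 × Fin 2) ℂ),
         (∀ k, 0 ≤ w k) ∧ (∑ k, w k) = 1 ∧
         (∀ k, (ρs k).PosSemidef) ∧ (∀ k, (ρs k).trace = 1) ∧
         (∀ k, (Ds k).PosSemidef) ∧
         (∀ k a a', (∑ b : Fin 2, Ds k (a, b) (a', b)) = if a = a' then 1 else 0) ∧
         W = ∑ k, (w k : ℂ) • Matrix.of fun p q : Fin 2 × Fin 2 × Fin 2 =>
           ρs k p.1 q.1 * Ds k p.2 q.2) := by
  constructor
  · let u : Fin 4 → Fin 2 → ℂ := ![e0, e1, ep, em]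
    let v : Fin 4 → Fin 2 × Fin 2 → ℂ := fun k x => ![e0, e0, e1, e1] k x.1 * u k x.2
    refine ⟨4, fun k => vecMulVec (u k) (star (u k)),
      fun k => (2⁻¹ : ℂ) • vecMulVec (v k) (star (v k)),
      fun k => posSemidef_vecMulVec_self_star _,
      fun k => (posSemidef_vecMulVec_self_star _).smul (by positivity), ?_⟩
    show W = ∑ k, _ ⊗ₖ _
    simp only [hW, trip_eq_kronecker, Fin.sum_univ_four, kronecker_smul, smul_add]
    rfl
  · rintro ⟨m, w, ρs, Ds, hw, -, hρ, -, hD, hDnorm, hWeq⟩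
    subst hW he0 he1 hep hem
    refine absurd (apply_eq_zero_of_eq_sum_smul_kronecker (i := 0) (i' := 1) (j₀ := (0, 0))
      (j₁ := (0, 1)) hw hρ hD hWeq (fun k => by simpa using hDnorm k 0 0)
      (by simp [trip]) (by simp [trip]) (1, 0) (1, 1)) ?_
    simp [trip]
end

section
/- For any bipartite ordered process W on A_I ⊗ A_O ⊗ B_I, the operator (1/d_{A_I})W + (1 − 1/d_{A_I})·(Λ_∖^{A_I} ⊗ id)(W) is a direct-cause-plus-common-cause (classical CCDC) process, where Λ_∖(ρ) = (1/(d_{A_I}−1))Σ_{k=1}^{d_{A_I}−1} Z^k ρ Z^{-k}; consequently the generalized robustness of any process satisfies R_G(W) ≤ 1 − 1/d_{A_I}. -/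
/-!
The channel `Λ∖` is Schur multiplication by `(n - 1)⁻¹ G`, where
`G = ∑_{k=1}^{n-1} z_k z_kᴴ` is the Gram matrix of the phase vectors `z_k = (ω^{ik})_i`.
By the Schur product theorem `(Λ∖ ⊗ id)(W)` is again an ordered process. Since
`G_ij = n δ_ij - 1`, the mixture `(1/n) W + (1 - 1/n) (Λ∖ ⊗ id)(W)` is the fully dephased
process `∑_i |i⟩⟨i| ⊗ W_ii`, and each block `W_ii`, whose `B_I`-marginal is `σ_ii 1`, is
`σ_ii` times the Choi operator of a channel; so the mixture is a direct-cause process.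
-/

open Matrix ComplexOrder

/-- Direct-cause processes: `W = Σ_k w_k ρ_k^{A_I} ⊗ D_k^{A_O B_I}` with `ρ_k` states
and `D_k` Choi operators of channels from `A_O` to `B_I`. -/
def IsDC (nI nO nB : ℕ)
    (W : Matrix (Fin nI × Fin nO × Fin nB) (Fin nI × Fin nO × Fin nB) ℂ) : Prop :=
  ∃ (m : ℕ) (w : Fin m → ℝ) (ρs : Fin m → Matrix (Fin nI) (Fin nI) ℂ)
    (Ds : Fin m → Matrix (Fin nO × Fin nB) (Fin nO × Fin nB) ℂ),
    (∀ k, 0 ≤ w k) ∧ (∑ k, w k) = 1 ∧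
    (∀ k, (ρs k).PosSemidef) ∧ (∀ k, (ρs k).trace = 1) ∧
    (∀ k, (Ds k).PosSemidef) ∧
    (∀ k a a', (∑ b : Fin nB, Ds k (a, b) (a', b)) = if a = a' then 1 else 0) ∧
    W = ∑ k, (w k : ℂ) • Matrix.of fun p q : Fin nI × Fin nO × Fin nB =>
      ρs k p.1 q.1 * Ds k p.2 q.2

/-- Common-cause processes: `W = ρ^{A_I B_I} ⊗ 1^{A_O}` with `ρ` a state. -/
def IsCC (nI nO nB : ℕ)
    (W : Matrix (Fin nI × Fin nO × Fin nB) (Fin nI × Fin nO × Fin nB) ℂ) : Prop :=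
  ∃ ρ : Matrix (Fin nI × Fin nB) (Fin nI × Fin nB) ℂ, ρ.PosSemidef ∧ ρ.trace = 1 ∧
    W = Matrix.of fun p q : Fin nI × Fin nO × Fin nB =>
      ρ (p.1, p.2.2) (q.1, q.2.2) * (if p.2.1 = q.2.1 then 1 else 0)

/-- Classical CCDC processes: convex mixtures of a common-cause and a direct-cause
process. -/
def IsCCDC (nI nO nB : ℕ)
    (W : Matrix (Fin nI × Fin nO × Fin nB) (Fin nI × Fin nO × Fin nB) ℂ) : Prop :=
  ∃ (p : ℝ) (Wcc Wdc : Matrix (Fin nI × Fin nO × Fin nB) (Fin nI × Fin nO × Fin nB) ℂ),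
    0 ≤ p ∧ p ≤ 1 ∧ IsCC nI nO nB Wcc ∧ IsDC nI nO nB Wdc ∧
    W = (p : ℂ) • Wcc + ((1 - p : ℝ) : ℂ) • Wdc

/-- Bipartite ordered processes: `W ⪰ 0` and `tr_{B_I}(W) = σ ⊗ 1^{A_O}` for some
state `σ`. -/
def IsOrdered (nI nO nB : ℕ)
    (W : Matrix (Fin nI × Fin nO × Fin nB) (Fin nI × Fin nO × Fin nB) ℂ) : Prop :=
  W.PosSemidef ∧ ∃ σ : Matrix (Fin nI) (Fin nI) ℂ, σ.PosSemidef ∧ σ.trace = 1 ∧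
    ∀ i a j a', (∑ b : Fin nB, W (i, a, b) (j, a', b))
      = σ i j * (if a = a' then 1 else 0)

def IsChoi (nO nB : ℕ) (D : Matrix (Fin nO × Fin nB) (Fin nO × Fin nB) ℂ) : Prop :=
  D.PosSemidef ∧ ∀ a a', (∑ b : Fin nB, D (a, b) (a', b)) = if a = a' then 1 else 0

def dephase {ι κ α : Type*} [DecidableEq ι] [Zero α] (W : Matrix (ι × κ) (ι × κ) α) :
    Matrix (ι × κ) (ι × κ) α :=
  of fun p q => if p.1 = q.1 then W p q else 0

lemma posSemidef_ofReal_smul {n : Type*} [Fintype n] {M : Matrix n n ℂ} (hM : M.PosSemidef)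
    {c : ℝ} (hc : 0 ≤ c) : ((c : ℂ) • M).PosSemidef :=
  hM.smul (by exact_mod_cast hc)

lemma isDC_of_blocks {nI nO nB : ℕ} (w : Fin nI → ℝ) (hw : ∀ i, 0 ≤ w i)
    (hw1 : ∑ i, w i = 1) (Ds : Fin nI → Matrix (Fin nO × Fin nB) (Fin nO × Fin nB) ℂ)
    (hDs : ∀ i, IsChoi nO nB (Ds i)) :
    IsDC nI nO nB (of fun p q => if p.1 = q.1 then (w p.1 : ℂ) * Ds p.1 p.2 q.2 else 0) := by
  refine ⟨nI, w, fun i => diagonal (Pi.single i 1), Ds, hw, hw1,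
    fun i => PosSemidef.diagonal (Pi.single_nonneg.mpr zero_le_one),
    fun i => by simp [trace_diagonal], fun i => (hDs i).1, fun i => (hDs i).2, ?_⟩
  ext p q
  by_cases h : p.1 = q.1 <;> simp [Matrix.sum_apply, diagonal_apply, Pi.single_apply, h]

lemma exists_isChoi_smul {nO nB : ℕ} (hnB : nB ≠ 0)
    {M : Matrix (Fin nO × Fin nB) (Fin nO × Fin nB) ℂ} (hM : M.PosSemidef)
    {c : ℝ} (hc : 0 ≤ c)
    (hmarg : ∀ a a', (∑ b : Fin nB, M (a, b) (a', b)) = c * if a = a' then 1 else 0) :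
    ∃ D, IsChoi nO nB D ∧ M = (c : ℂ) • D := by
  rcases hc.eq_or_lt with rfl | hc
  · refine ⟨(((nB : ℝ)⁻¹ : ℝ) : ℂ) • 1,
      ⟨posSemidef_ofReal_smul (c := (nB : ℝ)⁻¹) PosSemidef.one (by positivity), ?_⟩, ?_⟩
    · intro a a'
      by_cases h : a = a' <;> simp [one_apply, h, hnB]
    · have htr : M.trace = 0 := by
        simp [trace, Fintype.sum_prod_type, hmarg]
      simp [hM.trace_eq_zero_iff.mp htr]
  · refine ⟨((c⁻¹ : ℝ) : ℂ) • M,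
      ⟨posSemidef_ofReal_smul hM (inv_nonneg.mpr hc.le), fun a a' => ?_⟩, ?_⟩
    · simp [← Finset.mul_sum, hmarg, hc.ne']
    · rw [smul_smul, ← Complex.ofReal_mul, mul_inv_cancel₀ hc.ne', Complex.ofReal_one,
        one_smul]

lemma IsOrdered.isDC_dephase {nI nO nB : ℕ} (hnB : nB ≠ 0)
    {W : Matrix (Fin nI × Fin nO × Fin nB) (Fin nI × Fin nO × Fin nB) ℂ}
    (hW : IsOrdered nI nO nB W) : IsDC nI nO nB (dephase W) := by
  obtain ⟨hWpsd, σ, hσ, hσtr, hmarg⟩ := hW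
  have hσ0 : ∀ i, 0 ≤ (σ i i).re := fun i => (Complex.nonneg_iff.mp hσ.diag_nonneg).1
  have hσre : ∀ i, ((σ i i).re : ℂ) = σ i i := fun i =>
    Complex.ext rfl (Complex.nonneg_iff.mp hσ.diag_nonneg).2
  have hw1 : ∑ i, (σ i i).re = 1 := by
    simpa [trace, Complex.re_sum] using congrArg Complex.re hσtr
  choose Ds hDs hblock using fun i => exists_isChoi_smul hnB
    (hWpsd.submatrix fun r => (i, r)) (hσ0 i) (fun a a' => by simpa [hσre] using hmarg i a i a')
  convert isDC_of_blocks _ hσ0 hw1 Ds hDs using 1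
  ext ⟨i, r⟩ ⟨j, s⟩
  by_cases h : i = j
  · subst h
    simpa [dephase] using congrFun₂ (hblock i) r s
  · simp [dephase, h]

lemma exists_isCC {nI nO nB : ℕ} (hnI : nI ≠ 0) (hnB : nB ≠ 0) :
    ∃ W, IsCC nI nO nB W := by
  refine ⟨_, ((((nI : ℝ) * nB)⁻¹ : ℝ) : ℂ) • 1,
    posSemidef_ofReal_smul PosSemidef.one (by positivity), ?_, rfl⟩
  simp [trace_smul]
  field_simp

lemma IsDC.isCCDC {nI nO nB : ℕ} (hnI : nI ≠ 0) (hnB : nB ≠ 0)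
    {W : Matrix (Fin nI × Fin nO × Fin nB) (Fin nI × Fin nO × Fin nB) ℂ}
    (hW : IsDC nI nO nB W) : IsCCDC nI nO nB W := by
  obtain ⟨Wcc, hWcc⟩ := exists_isCC (nO := nO) hnI hnB
  exact ⟨0, Wcc, W, le_rfl, zero_le_one, hWcc, hW, by simp⟩

lemma IsOrdered.hadamard_submatrix_fst {nI nO nB : ℕ} {C : Matrix (Fin nI) (Fin nI) ℂ}
    (hC : C.PosSemidef) (hCdiag : ∀ i, C i i = 1)
    {W : Matrix (Fin nI × Fin nO × Fin nB) (Fin nI × Fin nO × Fin nB) ℂ}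
    (hW : IsOrdered nI nO nB W) : IsOrdered nI nO nB (C.submatrix Prod.fst Prod.fst ⊙ W) := by
  obtain ⟨hWpsd, σ, hσ, hσtr, hmarg⟩ := hW
  refine ⟨(hC.submatrix _).hadamard hWpsd, C ⊙ σ, hC.hadamard hσ, ?_, fun i a j a' => ?_⟩
  · simpa [trace, hCdiag] using hσtr
  · simp [← Finset.mul_sum, hmarg]

def phaseGram (n : ℕ) (ω : ℂ) : Matrix (Fin n) (Fin n) ℂ :=
  ∑ k ∈ Finset.Ico 1 n,
    vecMulVec (fun i : Fin n => (ω ^ (i : ℕ)) ^ k) (star fun i : Fin n => (ω ^ (i : ℕ)) ^ k)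

lemma posSemidef_phaseGram (n : ℕ) (ω : ℂ) : (phaseGram n ω).PosSemidef :=
  posSemidef_sum _ fun _ _ => posSemidef_vecMulVec_self_star _

lemma IsPrimitiveRoot.sum_Ico_pow_mul_inv_pow {K : Type*} [Field K] {ω : K} {n : ℕ}
    (hω : IsPrimitiveRoot ω n) (i j : Fin n) :
    ∑ k ∈ Finset.Ico 1 n, (ω ^ (i : ℕ) * (ω ^ (j : ℕ))⁻¹) ^ k
      = if i = j then (n : K) - 1 else -1 := by
  have hn : 1 ≤ n := Fin.pos i
  have hω0 : ω ≠ 0 := hω.ne_zero (by omega)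
  rw [Finset.sum_Ico_eq_sub _ hn]
  split_ifs with h
  · simp [h, hω0]
  · have hx : ω ^ (i : ℕ) * (ω ^ (j : ℕ))⁻¹ ≠ 1 := fun hx =>
      h (Fin.ext (hω.pow_inj i.isLt j.isLt (mul_inv_eq_one₀ (pow_ne_zero _ hω0) |>.mp hx)))
    have hxn : (ω ^ (i : ℕ) * (ω ^ (j : ℕ))⁻¹) ^ n = 1 := by
      rw [mul_pow, inv_pow, ← pow_mul, ← pow_mul, mul_comm (i : ℕ), mul_comm (j : ℕ), pow_mul,
        pow_mul, hω.pow_eq_one, one_pow, one_pow, inv_one, one_mul]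
    simp [geom_sum_eq hx, hxn]

lemma phaseGram_apply {n : ℕ} {ω : ℂ} (hω : IsPrimitiveRoot ω n) (i j : Fin n) :
    phaseGram n ω i j = if i = j then (n : ℂ) - 1 else -1 := by
  have hstar : star (ω ^ (j : ℕ)) = (ω ^ (j : ℕ))⁻¹ :=
    (RCLike.inv_eq_conj (by simp [hω.norm'_eq_one (Fin.pos i).ne'])).symm
  rw [← hω.sum_Ico_pow_mul_inv_pow]
  simp [phaseGram, Matrix.sum_apply, vecMulVec_apply, hstar, mul_pow]

lemma inv_diagonal_of_norm_eq_one {ι : Type*} [Fintype ι] [DecidableEq ι] {d : ι → ℂ}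
    (hd : ∀ i, ‖d i‖ = 1) : (diagonal d)⁻¹ = diagonal (star d) :=
  inv_eq_right_inv <| by
    rw [diagonal_mul_diagonal, ← diagonal_one]
    exact congrArg diagonal (funext fun i => by simp [RCLike.mul_conj, hd])

lemma sum_Ico_clock_conj {n : ℕ} {ω : ℂ} (hω : ‖ω‖ = 1) (ρ : Matrix (Fin n) (Fin n) ℂ) :
    ∑ k ∈ Finset.Ico 1 n, (diagonal fun i : Fin n => ω ^ (i : ℕ)) ^ k * ρ *
      (diagonal fun i : Fin n => ω ^ (i : ℕ))⁻¹ ^ k = phaseGram n ω ⊙ ρ := by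
  rw [inv_diagonal_of_norm_eq_one fun i => by simp [hω]]
  ext i j
  simp only [diagonal_pow, Matrix.sum_apply, mul_diagonal, diagonal_mul, Pi.pow_apply,
    Pi.star_apply, star_pow, RCLike.star_def, phaseGram, hadamard_apply, vecMulVec_apply,
    Finset.sum_mul]
  exact Finset.sum_congr rfl fun k _ => by ring

lemma inv_smul_add_phaseGram_hadamard_eq_dephase {n : ℕ} (hn : 2 ≤ n) {ω : ℂ} (hω : IsPrimitiveRoot ω n)
    {κ : Type*} (W : Matrix (Fin n × κ) (Fin n × κ) ℂ) :
    (n : ℂ)⁻¹ • W + (1 - (n : ℂ)⁻¹) •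
      ((((n : ℂ) - 1)⁻¹ • phaseGram n ω).submatrix Prod.fst Prod.fst ⊙ W) = dephase W := by
  have hn1 : (n : ℂ) - 1 ≠ 0 := sub_ne_zero.mpr (by exact_mod_cast (by omega : n ≠ 1))
  have hn0 : (n : ℂ) ≠ 0 := by exact_mod_cast (by omega : n ≠ 0)
  ext p q
  by_cases h : p.1 = q.1 <;> simp [dephase, phaseGram_apply hω, h] <;> field_simp <;> ring

theorem stmt_18_general (nI nO nB : ℕ) (hnI : 2 ≤ nI) (hnB : 1 ≤ nB)
    (ω : ℂ) (hω : ω = Complex.exp (2 * Real.pi * Complex.I / nI))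
    (Z : Matrix (Fin nI) (Fin nI) ℂ)
    (hZ : Z = Matrix.diagonal fun i : Fin nI => ω ^ (i : ℕ))
    (Λs : Matrix (Fin nI) (Fin nI) ℂ → Matrix (Fin nI) (Fin nI) ℂ)
    (hΛs : ∀ ρ, Λs ρ = ((nI : ℂ) - 1)⁻¹ •
      ∑ k ∈ Finset.Ico 1 nI, Z ^ k * ρ * Z⁻¹ ^ k)
    (W : Matrix (Fin nI × Fin nO × Fin nB) (Fin nI × Fin nO × Fin nB) ℂ)
    (hWord : IsOrdered nI nO nB W)
    (Ω : Matrix (Fin nI × Fin nO × Fin nB) (Fin nI × Fin nO × Fin nB) ℂ)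
    (hΩ : Ω = Matrix.of fun p q : Fin nI × Fin nO × Fin nB =>
      Λs (Matrix.of fun i j => W (i, p.2) (j, q.2)) p.1 q.1) :
    IsOrdered nI nO nB Ω ∧
    IsCCDC nI nO nB (((nI : ℂ))⁻¹ • W + (1 - ((nI : ℂ))⁻¹) • Ω) ∧
    sInf {r : ℝ | 0 ≤ r ∧ r ≤ 1 ∧
        ∃ Ω' : Matrix (Fin nI × Fin nO × Fin nB) (Fin nI × Fin nO × Fin nB) ℂ,
          IsOrdered nI nO nB Ω' ∧
          IsCCDC nI nO nB (((1 - r : ℝ) : ℂ) • W + (r : ℂ) • Ω')}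
      ≤ 1 - ((nI : ℝ))⁻¹ := by
  have hprim : IsPrimitiveRoot ω nI := hω ▸ Complex.isPrimitiveRoot_exp nI (by omega)
  have hn1 : (1 : ℝ) < nI := by exact_mod_cast hnI
  set C := ((nI : ℂ) - 1)⁻¹ • phaseGram nI ω with hCdef
  have hΩC : Ω = C.submatrix Prod.fst Prod.fst ⊙ W := by
    ext p q
    simp only [hΩ, hΛs, hZ, sum_Ico_clock_conj (hprim.norm'_eq_one (by omega))]
    simp [hCdef, mul_assoc]
  have hC : C.PosSemidef := by
    rw [hCdef, show ((nI : ℂ) - 1)⁻¹ = ((((nI : ℝ) - 1)⁻¹ : ℝ) : ℂ) by push_cast; rfl]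
    exact posSemidef_ofReal_smul (posSemidef_phaseGram _ _) (inv_nonneg.mpr (by linarith))
  have hCdiag : ∀ i, C i i = 1 := fun i => by
    simp [hCdef, phaseGram_apply hprim, sub_ne_zero.mpr (by exact_mod_cast hn1.ne' : (nI : ℂ) ≠ 1)]
  have hΩord : IsOrdered nI nO nB Ω := hΩC ▸ hWord.hadamard_submatrix_fst hC hCdiag
  have hmix : IsCCDC nI nO nB ((nI : ℂ)⁻¹ • W + (1 - (nI : ℂ)⁻¹) • Ω) := by
    rw [hΩC, hCdef, inv_smul_add_phaseGram_hadamard_eq_dephase hnI hprim]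
    exact (hWord.isDC_dephase (by omega)).isCCDC (by omega) (by omega)
  refine ⟨hΩord, hmix, csInf_le ⟨0, fun r hr => hr.1⟩ ⟨?_, ?_, Ω, hΩord, ?_⟩⟩
  · exact sub_nonneg.mpr (inv_le_one_of_one_le₀ hn1.le)
  · exact sub_le_self _ (by positivity)
  · convert hmix using 3 <;> push_cast <;> ring

/-- For any bipartite ordered process `W`, the mixture
`(1/d_{A_I})W + (1 − 1/d_{A_I})(Λ∖ ⊗ id)(W)` with
`Λ∖(ρ) = (1/(d_{A_I}−1)) Σ_{k=1}^{d_{A_I}−1} Z^k ρ Z^{-k}` is a classical CCDC process,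
`(Λ∖ ⊗ id)(W)` is itself a valid ordered process, and consequently the generalized
robustness satisfies `R_G(W) ≤ 1 − 1/d_{A_I}`. -/
theorem stmt_18 (nI nO nB : ℕ) (hnI : 2 ≤ nI) (hnO : 1 ≤ nO) (hnB : 1 ≤ nB)
    (ω : ℂ) (hω : ω = Complex.exp (2 * Real.pi * Complex.I / nI))
    (Z : Matrix (Fin nI) (Fin nI) ℂ)
    (hZ : Z = Matrix.diagonal fun i : Fin nI => ω ^ (i : ℕ))
    (Λs : Matrix (Fin nI) (Fin nI) ℂ → Matrix (Fin nI) (Fin nI) ℂ)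
    (hΛs : ∀ ρ, Λs ρ = ((nI : ℂ) - 1)⁻¹ •
      ∑ k ∈ Finset.Ico 1 nI, Z ^ k * ρ * Z⁻¹ ^ k)
    (W : Matrix (Fin nI × Fin nO × Fin nB) (Fin nI × Fin nO × Fin nB) ℂ)
    (hWord : IsOrdered nI nO nB W)
    (Ω : Matrix (Fin nI × Fin nO × Fin nB) (Fin nI × Fin nO × Fin nB) ℂ)
    (hΩ : Ω = Matrix.of fun p q : Fin nI × Fin nO × Fin nB =>
      Λs (Matrix.of fun i j => W (i, p.2) (j, q.2)) p.1 q.1) :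
    IsOrdered nI nO nB Ω ∧
    IsCCDC nI nO nB (((nI : ℂ))⁻¹ • W + (1 - ((nI : ℂ))⁻¹) • Ω) ∧
    sInf {r : ℝ | 0 ≤ r ∧ r ≤ 1 ∧
        ∃ Ω' : Matrix (Fin nI × Fin nO × Fin nB) (Fin nI × Fin nO × Fin nB) ℂ,
          IsOrdered nI nO nB Ω' ∧
          IsCCDC nI nO nB (((1 - r : ℝ) : ℂ) • W + (r : ℂ) • Ω')}
      ≤ 1 - ((nI : ℝ))⁻¹ :=
  stmt_18_general nI nO nB hnI hnB ω hω Z hZ Λs hΛs W hWord Ω hΩ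
end
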